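/- arXiv:1311.4864 — 2 statements merged into one kernel-verified Lean document; each statement's English description precedes it below -/
import Mathlib

section
/- If C = g_0, g_1, ..., g_{N-1} is a cyclic constant-weight Gray code of weight 2 for the (1,2,n)-LRM scheme (i.e., a sequence of N distinct binary words of length n, each of Hamming weight 2, where each g_{i+1} is obtained from g_i by replacing some cyclic window (j, j+1 mod n) holding the pattern (1,0) with (0,1), and g_0 is similarly obtained from g_{N-1}), then N ≤ 2n. -/
/-- A constant-weight push transition in the (1,2,n)-LRM scheme: some cyclic window
`(j, j+1 mod n)` holding the pattern `(1,0)` is replaced by `(0,1)`. -/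
def LRMTrans {n : ℕ} [NeZero n] (g g' : Fin n → Bool) : Prop :=
  ∃ j : Fin n, g j = true ∧ g (j + 1) = false ∧
    g' j = false ∧ g' (j + 1) = true ∧
    ∀ i : Fin n, i ≠ j → i ≠ j + 1 → g' i = g i

/-!
Follow the two ones of the word through lifts `U < V < U + n` in `ℕ`. Every step raises one lift
by one, so `U + V` grows by one per step and the gap `V - U ∈ [1, n - 1]` changes by `±1`. Since
`(U, V)` and `(V, U + n)` lift the same word, a word is determined by `(U + V) mod n` together with
the gap read in the frame given by the parity of `(U + V) / n` (`foldedGap`): the words live on a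
Möbius band whose core has length `n`, and the code is a closed curve without self-intersections
winding `N / n` times around it.

Sample the folded gap at the start of each round of `n` steps, giving values `P k` that depend only
on `k mod (N / n)`. Two rounds run in lockstep with folded gaps of equal parity that never meet, so
they keep their order; at the end of a round the frame flips. Hence `k ↦ k + 1` reverses the order
of the `P k`, so `k ↦ k + 2` fixes the minimum, which forces `N / n ≤ 2`.
-/

section Words

variable {n : ℕ}

def pairWord (a b : Fin n) : Fin n → Bool := fun i => decide (i = a ∨ i = b)

theorem pairWord_eq_pairWord_iff {a b a' b' : Fin n} :
    pairWord a b = pairWord a' b' ↔ a = a' ∧ b = b' ∨ a = b' ∧ b = a' := by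
  rw [← Set.pair_eq_pair_iff, funext_iff, Set.ext_iff]
  simp only [pairWord, decide_eq_decide, Set.mem_insert_iff, Set.mem_singleton_iff]

theorem LRMTrans.pairWord_cases [NeZero n] {a b : Fin n} {g : Fin n → Bool} (hab : a ≠ b)
    (h : LRMTrans (pairWord a b) g) :
    g a = false ∧ g = pairWord (a + 1) b ∧ a + 1 ≠ b ∨
      g a = true ∧ g = pairWord a (b + 1) ∧ b + 1 ≠ a := by
  obtain ⟨j, hj, hj1, hgj, hgj1, hg⟩ := h
  have hg' : ∀ i, g i = if i = j then false else if i = j + 1 then true else pairWord a b i :=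
    fun i => by split_ifs <;> simp_all
  simp only [pairWord, decide_eq_true_eq, decide_eq_false_iff_not, not_or] at hj hj1 hg'
  rcases hj with rfl | rfl
  · refine Or.inl ⟨hgj, funext fun i => ?_, hj1.2⟩
    rw [hg', pairWord]; grind
  · refine Or.inr ⟨by rw [hg']; grind, funext fun i => ?_, hj1.1⟩
    rw [hg', pairWord]; grind

end Words

def foldedGap (n U V : ℕ) : ℤ :=
  if Even ((U + V) / n) then (V : ℤ) - U else n - ((V : ℤ) - U)

theorem even_foldedGap {n U V : ℕ} (hn : 0 < n) (h : n ∣ U + V) : Even (foldedGap n U V) := by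
  obtain ⟨c, hc⟩ := h
  have hcz : (U : ℤ) + V = n * c := by exact_mod_cast hc
  unfold foldedGap
  rw [hc, Nat.mul_div_cancel_left c hn]
  split_ifs with hce
  · rw [show (V : ℤ) - U = n * c - 2 * U by linarith]
    exact (((Int.even_coe_nat c).2 hce).mul_left _).sub (even_two_mul _)
  · rw [show (n : ℤ) - (V - U) = n * (1 - c) + 2 * U by linarith]
    exact (odd_one.sub_odd ((Int.odd_coe_nat c).2 (Nat.not_even_iff_odd.1 hce))).mul_left _
      |>.add (even_two_mul _)

theorem abs_foldedGap_sub_of_not_dvd {n U V U' V' : ℕ} (hU : U ≤ U') (hV : V ≤ V')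
    (hsum : U' + V' = U + V + 1) (h : ¬ n ∣ U + V + 1) :
    |foldedGap n U' V' - foldedGap n U V| = 1 := by
  have hq : (U' + V') / n = (U + V) / n := by rw [hsum, Nat.succ_div, if_neg h, add_zero]
  unfold foldedGap
  rw [hq, abs_eq zero_le_one]
  split_ifs <;> omega

theorem abs_foldedGap_add_of_dvd {n U V U' V' : ℕ} (hU : U ≤ U') (hV : V ≤ V')
    (hsum : U' + V' = U + V + 1) (h : n ∣ U + V + 1) :
    |foldedGap n U' V' + foldedGap n U V - n| = 1 := by
  have hq : (U' + V') / n = (U + V) / n + 1 := by rw [hsum, Nat.succ_div, if_pos h]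
  unfold foldedGap
  rw [hq, abs_eq zero_le_one]
  simp only [Nat.even_add_one]
  split_ifs <;> omega

theorem exists_shift_iff_foldedGap_eq {n U V U' V' : ℕ} (hn : 0 < n) :
    (∃ j : ℤ, (U' + V' : ℤ) = U + V + j * n ∧
      (V' - U' : ℤ) = if Even j then (V : ℤ) - U else n - ((V : ℤ) - U)) ↔
    U + V ≡ U' + V' [MOD n] ∧ foldedGap n U V = foldedGap n U' V' := by
  have hn' : (n : ℤ) ≠ 0 := by exact_mod_cast hn.ne'
  have hx : (n : ℤ) * ((U + V) / n : ℕ) + ((U + V) % n : ℕ) = U + V := by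
    exact_mod_cast Nat.div_add_mod (U + V) n
  have hx' : (n : ℤ) * ((U' + V') / n : ℕ) + ((U' + V') % n : ℕ) = U' + V' := by
    exact_mod_cast Nat.div_add_mod (U' + V') n
  unfold foldedGap Nat.ModEq
  set q := (U + V) / n
  set q' := (U' + V') / n
  constructor
  · rintro ⟨j, hj, hD⟩
    have hmod : (U + V) % n = (U' + V') % n :=
      (Nat.modEq_iff_dvd.2 ⟨j, by push_cast; linarith⟩ : U + V ≡ U' + V' [MOD n])
    have hq : (q' : ℤ) = q + j := by
      rw [hmod] at hx
      have : (n : ℤ) * (q' - q - j) = 0 := by linarith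
      linarith [(mul_eq_zero.1 this).resolve_left hn']
    have hpar : Even q' ↔ (Even q ↔ Even j) := by
      rw [← Int.even_coe_nat, ← Int.even_coe_nat, hq, Int.even_add]
    refine ⟨hmod, ?_⟩
    split_ifs at hD ⊢ <;> first | linarith | tauto
  · rintro ⟨hmod, hF⟩
    have hpar : Even ((q' : ℤ) - q) ↔ (Even q ↔ Even q') := by
      rw [Int.even_sub, Int.even_coe_nat, Int.even_coe_nat]; exact Iff.comm
    rw [hmod] at hx
    refine ⟨q' - q, by linarith, ?_⟩
    split_ifs at hF ⊢ <;> first | linarith | tauto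

theorem lt_and_even_sub_of_forall_ne {x y : ℕ → ℤ} {R : ℕ}
    (hx : ∀ r < R, |x (r + 1) - x r| = 1) (hy : ∀ r < R, |y (r + 1) - y r| = 1)
    (hne : ∀ r ≤ R, x r ≠ y r) (h0 : x 0 < y 0) (heven : Even (y 0 - x 0)) :
    x R < y R ∧ Even (y R - x R) := by
  induction R with
  | zero => exact ⟨h0, heven⟩
  | succ R ih =>
    obtain ⟨hlt, hev⟩ := ih (fun r hr => hx r (by omega)) (fun r hr => hy r (by omega))
      (fun r hr => hne r (by omega))
    have hxR := (abs_eq zero_le_one).1 (hx R R.lt_succ_self)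
    have hyR := (abs_eq zero_le_one).1 (hy R R.lt_succ_self)
    have hneR := hne (R + 1) le_rfl
    rw [Int.even_iff] at hev ⊢
    omega

theorem le_two_of_shift_reverses_order {m : ℕ} (hm : 0 < m) {P : ℕ → ℤ}
    (hP : ∀ k l, P k = P l ↔ k ≡ l [MOD m])
    (hrev : ∀ k l, P k < P l → P (l + 1) < P (k + 1)) :
    m ≤ 2 := by
  by_contra! hm3
  obtain ⟨k, -, hk⟩ := (Finset.range m).exists_min_image P ⟨0, Finset.mem_range.2 hm⟩
  have hmin : ∀ l, P k ≤ P l := fun l =>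
    ((hP _ _).2 (Nat.mod_modEq l m)) ▸ hk _ (Finset.mem_range.2 (Nat.mod_lt l hm))
  have hlt : P k < P (k + (m - 2)) := (hmin _).lt_of_ne fun h => by
    have h0 : 0 ≡ m - 2 [MOD m] := Nat.ModEq.add_left_cancel' k ((hP _ _).1 h)
    rw [Nat.ModEq, Nat.zero_mod, Nat.mod_eq_of_lt (by omega)] at h0
    omega
  have hback : P (k + (m - 2) + 1 + 1) = P k :=
    (hP _ _).2 (by rw [show k + (m - 2) + 1 + 1 = k + m by omega]; exact Nat.add_modEq_right)
  linarith [hrev _ _ (hrev _ _ hlt), hmin (k + 1 + 1)]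

structure IsFoldedWalk (n : ℕ) (φ : ℕ → ℤ) : Prop where
  step : ∀ t, ¬ n ∣ t + 1 → |φ (t + 1) - φ t| = 1
  flip : ∀ t, n ∣ t + 1 → |φ (t + 1) + φ t - n| = 1
  even : ∀ k, Even (φ (k * n))

namespace IsFoldedWalk

variable {n : ℕ} {φ : ℕ → ℤ}

theorem next_round_lt (hφ : IsFoldedWalk n φ) (hn : 0 < n) {k l : ℕ}
    (hne : ∀ r, φ (k * n + r) ≠ φ (l * n + r)) (hlt : φ (k * n) < φ (l * n)) :
    φ ((l + 1) * n) < φ ((k + 1) * n) := by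
  have hinner : ∀ k r, r < n - 1 → ¬ n ∣ k * n + r + 1 := fun k r hr h =>
    Nat.not_dvd_of_pos_of_lt r.succ_pos (by omega)
      ((Nat.dvd_add_right (dvd_mul_left n k)).1 (by rwa [add_assoc] at h))
  obtain ⟨hlt', hev⟩ := lt_and_even_sub_of_forall_ne (x := fun r => φ (k * n + r))
    (y := fun r => φ (l * n + r)) (R := n - 1)
    (fun r hr => hφ.step _ (hinner k r hr)) (fun r hr => hφ.step _ (hinner l r hr))
    (fun r _ => hne r) hlt ((hφ.even l).sub (hφ.even k))
  have hend : ∀ k, k * n + (n - 1) + 1 = (k + 1) * n := fun k => by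
    rw [add_assoc, Nat.sub_add_cancel hn, add_mul, one_mul]
  have hk := hφ.flip (k * n + (n - 1)) (hend k ▸ dvd_mul_left n _)
  have hl := hφ.flip (l * n + (n - 1)) (hend l ▸ dvd_mul_left n _)
  have hne' := hne n
  rw [hend, abs_eq zero_le_one] at hk hl
  rw [← add_one_mul k, ← add_one_mul l] at hne'
  simp only [Int.even_iff] at hev
  omega

theorem le_two_mul {N : ℕ} (hφ : IsFoldedWalk n φ) (hn : 0 < n) (hN : 0 < N)
    (hper : ∀ t t', t ≡ t' [MOD N] ↔ t ≡ t' [MOD n] ∧ φ t = φ t') :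
    N ≤ 2 * n := by
  obtain ⟨m, rfl⟩ : n ∣ N :=
    Nat.modEq_zero_iff_dvd.1 ((hper N 0).1 (Nat.modEq_zero_iff_dvd.2 dvd_rfl)).1
  have hm : 0 < m := Nat.pos_of_mul_pos_left hN
  have hcol : ∀ k l r, k * n + r ≡ l * n + r [MOD n] := fun k l r =>
    (((Nat.modEq_zero_iff_dvd.2 (dvd_mul_left n k)).trans
      (Nat.modEq_zero_iff_dvd.2 (dvd_mul_left n l)).symm).add_right r)
  have hblock : ∀ k l r, k * n + r ≡ l * n + r [MOD n * m] ↔ k ≡ l [MOD m] := by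
    intro k l r
    rw [mul_comm n m]
    exact ⟨fun h => (Nat.ModEq.add_right_cancel' r h).mul_right_cancel' hn.ne',
      fun h => (h.mul_right' n).add_right r⟩
  have hP : ∀ k l, φ (k * n) = φ (l * n) ↔ k ≡ l [MOD m] := fun k l => by
    have h := (hper (k * n + 0) (l * n + 0)).symm.trans (hblock k l 0)
    rwa [and_iff_right (hcol k l 0)] at h
  have hrev : ∀ k l, φ (k * n) < φ (l * n) → φ ((l + 1) * n) < φ ((k + 1) * n) :=
    fun k l hkl => hφ.next_round_lt hn (fun r h =>
      hkl.ne ((hP k l).2 ((hblock k l r).1 ((hper _ _).2 ⟨hcol k l r, h⟩)))) hkl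
  exact (Nat.mul_le_mul_left n (le_two_of_shift_reverses_order hm hP hrev)).trans_eq (mul_comm n 2)

end IsFoldedWalk

section Lifts

open Fin.CommRing

variable {n : ℕ}

theorem Fin.natCast_ne_of_lt_of_lt_add [NeZero n] {a b : ℕ} (hab : a < b) (hba : b < a + n) :
    (a : Fin n) ≠ b := by
  rw [Ne, CharP.natCast_eq_natCast (Fin n) n, Nat.modEq_iff_dvd' hab.le]
  exact fun h => absurd (Nat.le_of_dvd (by omega) h) (by omega)

theorem exists_pairWord_of_card_eq_two [NeZero n] {w : Fin n → Bool}
    (hw : (Finset.univ.filter (fun i => w i = true)).card = 2) :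
    ∃ a b : ℕ, a < b ∧ b < a + n ∧ w = pairWord a b := by
  obtain ⟨x, y, hxy, hs⟩ := Finset.card_eq_two.1 hw
  have hw : w = pairWord x y := funext fun i => by
    have := congrArg (i ∈ ·) hs
    simp only [Finset.mem_filter, Finset.mem_univ, true_and, Finset.mem_insert,
      Finset.mem_singleton, eq_iff_iff] at this
    simp [pairWord, ← this]
  rcases hxy.lt_or_gt with h | h
  · exact ⟨x, y, h, by omega, by simpa using hw⟩
  · refine ⟨y, x, h, by omega, ?_⟩
    simpa [hw] using pairWord_eq_pairWord_iff.2 (Or.inr ⟨rfl, rfl⟩)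

-- The one at the lift `q.1` has moved exactly when its position is vacated.
def liftTokens [NeZero n] (G : ℕ → Fin n → Bool) (p : ℕ × ℕ) : ℕ → ℕ × ℕ
  | 0 => p
  | t + 1 =>
    let q := liftTokens G p t
    if G (t + 1) q.1 then (q.1, q.2 + 1) else (q.1 + 1, q.2)

theorem liftTokens_mono [NeZero n] (G : ℕ → Fin n → Bool) (p : ℕ × ℕ) (t : ℕ) :
    (liftTokens G p t).1 ≤ (liftTokens G p (t + 1)).1 ∧
      (liftTokens G p t).2 ≤ (liftTokens G p (t + 1)).2 := by
  simp only [liftTokens]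
  split_ifs <;> simp

theorem liftTokens_sum [NeZero n] (G : ℕ → Fin n → Bool) (p : ℕ × ℕ) (t : ℕ) :
    (liftTokens G p t).1 + (liftTokens G p t).2 = p.1 + p.2 + t := by
  induction t with
  | zero => rfl
  | succ t ih =>
    simp only [liftTokens]
    split_ifs <;> simp only at ih ⊢ <;> omega

theorem liftTokens_spec [NeZero n] {G : ℕ → Fin n → Bool}
    (htrans : ∀ t, LRMTrans (G t) (G (t + 1))) {a b : ℕ} (hab : a < b) (hba : b < a + n)
    (h0 : G 0 = pairWord a b) (t : ℕ) :
    G t = pairWord (liftTokens G (a, b) t).1 (liftTokens G (a, b) t).2 ∧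
      (liftTokens G (a, b) t).1 < (liftTokens G (a, b) t).2 ∧
      (liftTokens G (a, b) t).2 < (liftTokens G (a, b) t).1 + n := by
  induction t with
  | zero => exact ⟨h0, hab, hba⟩
  | succ t ih =>
    obtain ⟨hG, hlt, hltn⟩ := ih
    have htr := htrans t
    rw [hG] at htr
    rcases htr.pairWord_cases (Fin.natCast_ne_of_lt_of_lt_add hlt hltn) with
      ⟨hU, hG', hne⟩ | ⟨hU, hG', hne⟩
    · simp only [liftTokens, hU, Bool.false_eq_true, if_false]
      refine ⟨by rw [hG']; push_cast; rfl, ?_, by omega⟩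
      exact (Nat.succ_le_of_lt hlt).lt_of_ne fun h => hne (by rw [← h]; push_cast; rfl)
    · simp only [liftTokens, hU, if_true]
      refine ⟨by rw [hG']; push_cast; rfl, by omega, ?_⟩
      exact (Nat.succ_le_of_lt hltn).lt_of_ne fun h => hne (by rw [← Nat.cast_succ, h]; simp)

theorem pairWord_natCast_eq_iff [NeZero n] {U V U' V' : ℕ} (hUV : U < V) (hVU : V < U + n)
    (hUV' : U' < V') (hVU' : V' < U' + n) :
    pairWord (U : Fin n) V = pairWord U' V' ↔ ∃ j : ℤ, (U' + V' : ℤ) = U + V + j * n ∧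
      (V' - U' : ℤ) = if Even j then (V : ℤ) - U else n - ((V : ℤ) - U) := by
  have hn : (0 : ℤ) < n := by omega
  rw [pairWord_eq_pairWord_iff]
  simp only [CharP.natCast_eq_natCast (Fin n) n, Nat.modEq_iff_dvd]
  constructor
  · rintro (⟨⟨k, hk⟩, ⟨l, hl⟩⟩ | ⟨⟨k, hl⟩, ⟨l, hk⟩⟩)
    · have hlk : (n : ℤ) * (l - k) = 0 :=
        Int.eq_zero_of_abs_lt_dvd ⟨l - k, rfl⟩ (abs_lt.2 ⟨by linarith, by linarith⟩)
      obtain rfl : k = l := by linarith [(mul_eq_zero.1 hlk).resolve_left hn.ne']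
      exact ⟨2 * k, by linarith, by simp only [even_two_mul, if_true]; linarith⟩
    · have hlk : (n : ℤ) * (k - l - 1) = 0 :=
        Int.eq_zero_of_abs_lt_dvd ⟨k - l - 1, rfl⟩ (abs_lt.2 ⟨by linarith, by linarith⟩)
      obtain rfl : k = l + 1 := by linarith [(mul_eq_zero.1 hlk).resolve_left hn.ne']
      refine ⟨2 * l + 1, by linarith, ?_⟩
      simp only [Int.not_even_two_mul_add_one, if_false]
      linarith
  · rintro ⟨j, hx, hD⟩
    obtain ⟨k, rfl | rfl⟩ := Int.even_or_odd' j
    · simp only [even_two_mul, if_true] at hD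
      exact Or.inl ⟨⟨k, by linarith⟩, ⟨k, by linarith⟩⟩
    · simp only [Int.not_even_two_mul_add_one, if_false] at hD
      exact Or.inr ⟨⟨k + 1, by linarith⟩, ⟨k, by linarith⟩⟩

theorem period_le_two_mul [NeZero n] {N : ℕ} (hN : 0 < N) {G : ℕ → Fin n → Bool}
    (hG : ∀ t t', G t = G t' ↔ t ≡ t' [MOD N]) (htrans : ∀ t, LRMTrans (G t) (G (t + 1)))
    {a b : ℕ} (hab : a < b) (hba : b < a + n) (h0 : G 0 = pairWord a b) : N ≤ 2 * n := by
  have hn : 0 < n := Nat.pos_of_neZero n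
  set U := fun t => (liftTokens G (a, b) t).1
  set V := fun t => (liftTokens G (a, b) t).2
  have hlift : ∀ t, G t = pairWord (U t) (V t) ∧ U t < V t ∧ V t < U t + n :=
    liftTokens_spec htrans hab hba h0
  have hsum : ∀ t, U t + V t = a + b + t := liftTokens_sum G (a, b)
  have hsucc : ∀ t, U (t + 1) + V (t + 1) = U t + V t + 1 := fun t => by rw [hsum, hsum]; rfl
  obtain ⟨t0, ht0⟩ : ∃ t0, n ∣ a + b + t0 := ⟨(a + b) * (n - 1), Dvd.intro_left (a + b)
    (by rw [Nat.mul_sub_one]; have := Nat.le_mul_of_pos_right (a + b) hn; omega)⟩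
  have hshift : ∀ τ, U (t0 + τ) + V (t0 + τ) = a + b + t0 + τ := fun τ => by
    rw [hsum]; omega
  have hcancel : ∀ c k t t' : ℕ, c + t ≡ c + t' [MOD k] ↔ t ≡ t' [MOD k] := fun c k _ _ =>
    ⟨Nat.ModEq.add_left_cancel' c, Nat.ModEq.add_left c⟩
  have hφ : IsFoldedWalk n fun τ => foldedGap n (U (t0 + τ)) (V (t0 + τ)) := by
    refine ⟨fun τ hτ => ?_, fun τ hτ => ?_, fun k => ?_⟩
    · obtain ⟨hU, hV⟩ := liftTokens_mono G (a, b) (t0 + τ)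
      exact abs_foldedGap_sub_of_not_dvd hU hV (hsucc _)
        (by rwa [hshift, add_assoc, Nat.dvd_add_right ht0])
    · obtain ⟨hU, hV⟩ := liftTokens_mono G (a, b) (t0 + τ)
      exact abs_foldedGap_add_of_dvd hU hV (hsucc _)
        (by rwa [hshift, add_assoc, Nat.dvd_add_right ht0])
    · exact even_foldedGap hn (by rw [hshift]; exact ht0.add (dvd_mul_left n k))
  refine hφ.le_two_mul hn hN fun τ τ' => ?_
  obtain ⟨_, hlt, hltn⟩ := hlift (t0 + τ)
  obtain ⟨_, hlt', hltn'⟩ := hlift (t0 + τ')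
  rw [← hcancel t0, ← hG, (hlift _).1, (hlift _).1,
    pairWord_natCast_eq_iff hlt hltn hlt' hltn', exists_shift_iff_foldedGap_eq hn,
    hshift, hshift, hcancel]

end Lifts

theorem stmt_4_general (n N : ℕ) [NeZero n] [NeZero N]
    (g : Fin N → (Fin n → Bool))
    (hdist : Function.Injective g)
    (hw : ∀ i : Fin N, (Finset.univ.filter (fun j => g i j = true)).card = 2)
    (htrans : ∀ i : Fin N, LRMTrans (g i) (g (i + 1))) :
    N ≤ 2 * n := by
  obtain ⟨a, b, hab, hba, h0⟩ := exists_pairWord_of_card_eq_two (hw 0)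
  open Fin.CommRing in
  refine period_le_two_mul (Nat.pos_of_neZero N) (G := fun t => g t)
    (fun t t' => hdist.eq_iff.trans (CharP.natCast_eq_natCast (Fin N) N))
    (fun t => by simpa using htrans t) hab hba (by simpa using h0)

theorem stmt_4 (n N : ℕ) [NeZero n] [NeZero N] (hn : 3 ≤ n)
    (g : Fin N → (Fin n → Bool))
    (hdist : Function.Injective g)
    (hw : ∀ i : Fin N, (Finset.univ.filter (fun j => g i j = true)).card = 2)
    (htrans : ∀ i : Fin N, LRMTrans (g i) (g (i + 1))) :
    N ≤ 2 * n :=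
  stmt_4_general n N g hdist hw htrans
end

section
/- Any cyclic constant-weight Gray code of weight 2 for the (1,2,n)-LRM scheme has size N ≤ binom(n,2) − (n−3)(n−5)/8. -/
/-!
Lift the two ones of the words to positions `a t < b t < a t + n` in `ℕ`. Each transition moves
exactly one of them up by one, so `a t + b t` grows by one per step while `b t - a t` stays in
`(0, n)`: the walk `a` has steps `0` or `1` and stays within bounded distance of slope `1/2`.
If no window of length `2n` raised `a` by exactly `n`, the window increments
`a (t + 2n) - a t`, which change by at most one as `t` moves, would stay on one side of `n`
forever and `a` would drift away from slope `1/2`. On such a window both ones advance by `n`,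
so the word recurs after `2n` steps and injectivity forces `N ∣ 2n`. Hence `N ≤ 2n`, which is
below the bound for `n ≥ 5`.
-/

theorem two_mul_le_choose_two_sub {n : ℕ} (hn : 5 ≤ n) :
    2 * n ≤ n.choose 2 - (n - 3) * (n - 5) / 8 := by
  obtain ⟨m, rfl⟩ : ∃ m, n = m + 5 := ⟨n - 5, by omega⟩
  rw [Nat.choose_two_right, show m + 5 - 3 = m + 2 by omega, show m + 5 - 5 = m by omega,
    show m + 5 - 1 = m + 4 by omega]
  have hchoose : (m + 5) * (m + 4) / 2 * 2 = (m + 5) * (m + 4) :=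
    Nat.div_mul_cancel (Nat.even_mul_pred_self (m + 5)).two_dvd
  have hdiv := Nat.div_mul_le_self ((m + 2) * m) 8
  apply Nat.le_sub_of_add_le
  nlinarith

theorem exists_add_two_mul_eq_add {u : ℕ → ℕ} {C : ℕ}
    (hu : ∀ t, u (t + 1) = u t ∨ u (t + 1) = u t + 1)
    (hlo : ∀ t, t ≤ 2 * u t + C) (hhi : ∀ t, 2 * u t ≤ t + C) (m : ℕ) :
    ∃ t, u (t + 2 * m) = u t + m := by
  by_contra! hne
  have hshift : ∀ t,
      u (t + 1 + 2 * m) = u (t + 2 * m) ∨ u (t + 1 + 2 * m) = u (t + 2 * m) + 1 :=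
    fun t => by rw [Nat.add_right_comm]; exact hu _
  rcases (hne 0).lt_or_gt with h0 | h0
  · have hdown : ∀ t, u (t + 2 * m) < u t + m := by
      intro t
      induction t with
      | zero => exact h0
      | succ t ih => have := hne (t + 1); have := hu t; have := hshift t; omega
    have hK : ∀ K, u (2 * m * K) + K ≤ u 0 + K * m := by
      intro K
      induction K with
      | zero => simp
      | succ K ih =>
        have := hdown (2 * m * K)
        rw [show 2 * m * (K + 1) = 2 * m * K + 2 * m by ring]
        nlinarith
    have := hK (C + 1)
    have := hlo (2 * m * (C + 1))
    have := hhi 0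
    nlinarith
  · have hup : ∀ t, u t + m < u (t + 2 * m) := by
      intro t
      induction t with
      | zero => exact h0
      | succ t ih => have := hne (t + 1); have := hu t; have := hshift t; omega
    have hK : ∀ K, u 0 + K * (m + 1) ≤ u (2 * m * K) := by
      intro K
      induction K with
      | zero => simp
      | succ K ih =>
        have := hup (2 * m * K)
        rw [show 2 * m * (K + 1) = 2 * m * K + 2 * m by ring]
        nlinarith
    have := hK (C + 1)
    have := hhi (2 * m * (C + 1))
    nlinarith

open Finset Fin.NatCast

section
variable {n : ℕ} [NeZero n]

theorem natCast_ne_natCast_of_lt_of_lt_add {a b : ℕ} (hab : a < b) (hba : b < a + n) :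
    (a : Fin n) ≠ (b : Fin n) := by
  intro h
  have hmod : a % n = b % n := by simpa [Fin.ext_iff, Fin.val_natCast] using h
  have := Nat.le_of_dvd (by omega) ((Nat.modEq_iff_dvd' hab.le).1 hmod)
  omega

theorem apply_eq_true_iff_of_push {w w' : Fin n → Bool} {j o : Fin n}
    (hpush : w j = true ∧ w (j + 1) = false ∧ w' j = false ∧ w' (j + 1) = true ∧
      ∀ i : Fin n, i ≠ j → i ≠ j + 1 → w' i = w i)
    (hoj : o ≠ j) (hw : ∀ x, w x = true ↔ x = j ∨ x = o) (x : Fin n) :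
    w' x = true ↔ x = j + 1 ∨ x = o := by
  obtain ⟨hj, hj1, hj', hj1', hrest⟩ := hpush
  have hoj1 : o ≠ j + 1 := fun h => by simp [← h, (hw o).2 (Or.inr rfl)] at hj1
  by_cases hx1 : x = j + 1
  · simp [hx1, hj1']
  by_cases hxj : x = j
  · subst hxj
    simp [hj', hx1, Ne.symm hoj]
  · rw [hrest x hxj hx1, hw x]
    simp [hxj, hx1]

def IsLift (w : Fin n → Bool) (p : ℕ × ℕ) : Prop :=
  p.1 < p.2 ∧ p.2 < p.1 + n ∧ ∀ x, w x = true ↔ x = p.1 ∨ x = p.2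

theorem exists_isLift {w : Fin n → Bool} (hw : (univ.filter (fun j => w j = true)).card = 2) :
    ∃ p, IsLift w p := by
  obtain ⟨x, y, hxy, hs⟩ := card_eq_two.1 hw
  have hw' : ∀ z, w z = true ↔ z = x ∨ z = y := fun z => by
    simpa using congrArg (z ∈ ·) hs
  clear hs
  wlog hlt : x < y generalizing x y
  · exact this y x hxy.symm (fun z => (hw' z).trans or_comm)
      (lt_of_le_of_ne (not_lt.1 hlt) hxy.symm)
  refine ⟨(x.val, y.val), hlt, by omega, fun z => ?_⟩
  simp only [Fin.cast_val_eq_self, hw']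

theorem IsLift.eq_of_add_eq {w w' : Fin n → Bool} {p p' : ℕ × ℕ} (h : IsLift w p)
    (h' : IsLift w' p') (h1 : p'.1 = p.1 + n) (h2 : p'.2 = p.2 + n) : w' = w := by
  funext x
  rw [Bool.eq_iff_iff, h.2.2, h'.2.2, h1, h2]
  simp

-- If `w'` still has a one at the first position, the transition moved the second one.
def liftStep (w' : Fin n → Bool) (p : ℕ × ℕ) : ℕ × ℕ :=
  if w' p.1 then (p.1, p.2 + 1) else (p.1 + 1, p.2)

theorem liftStep_fst (w' : Fin n → Bool) (p : ℕ × ℕ) :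
    (liftStep w' p).1 = p.1 ∨ (liftStep w' p).1 = p.1 + 1 := by
  unfold liftStep; split <;> simp

theorem liftStep_fst_add_snd (w' : Fin n → Bool) (p : ℕ × ℕ) :
    (liftStep w' p).1 + (liftStep w' p).2 = p.1 + p.2 + 1 := by
  unfold liftStep; split <;> simp <;> omega

theorem IsLift.step {w w' : Fin n → Bool} {p : ℕ × ℕ} (hp : IsLift w p)
    (h : LRMTrans w w') : IsLift w' (liftStep w' p) := by
  obtain ⟨a, b⟩ := p
  obtain ⟨hab, hba, hw⟩ := hp
  dsimp only at hab hba hw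
  obtain ⟨j, hpush⟩ := h
  have hne : (a : Fin n) ≠ b := natCast_ne_natCast_of_lt_of_lt_add hab hba
  rcases (hw j).1 hpush.1 with rfl | rfl
  · have hstep : liftStep w' (a, b) = (a + 1, b) := by simp [liftStep, hpush.2.2.1]
    have hb : b ≠ a + 1 := by
      rintro rfl
      have := (hw _).2 (Or.inr rfl)
      rw [Nat.cast_succ, hpush.2.1] at this
      exact Bool.false_ne_true this
    refine hstep ▸ ⟨by omega, by omega, fun x => ?_⟩
    rw [Nat.cast_succ]
    exact apply_eq_true_iff_of_push hpush hne.symm hw x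
  · have hb : (a : Fin n) ≠ b + 1 := fun h => by simp [← h, (hw _).2 (Or.inl rfl)] at hpush
    have hstep : liftStep w' (a, b) = (a, b + 1) := by
      simp [liftStep, hpush.2.2.2.2 _ hne hb, (hw _).2 (Or.inl rfl)]
    have hbn : b + 1 ≠ a + n := by
      intro h
      apply hb
      simpa [Nat.cast_succ] using congrArg (fun k : ℕ => (k : Fin n)) h.symm
    refine hstep ▸ ⟨by omega, by omega, fun x => ?_⟩
    rw [Nat.cast_succ, or_comm]
    exact apply_eq_true_iff_of_push hpush hne (fun x => (hw x).trans or_comm) x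

def liftWalk (G : ℕ → Fin n → Bool) (p : ℕ × ℕ) : ℕ → ℕ × ℕ
  | 0 => p
  | t + 1 => liftStep (G (t + 1)) (liftWalk G p t)

theorem isLift_liftWalk {G : ℕ → Fin n → Bool} {p : ℕ × ℕ}
    (hG : ∀ t, LRMTrans (G t) (G (t + 1))) (hp : IsLift (G 0) p) (t : ℕ) :
    IsLift (G t) (liftWalk G p t) := by
  induction t with
  | zero => exact hp
  | succ t ih => exact ih.step (hG t)

theorem liftWalk_fst_add_snd (G : ℕ → Fin n → Bool) (p : ℕ × ℕ) (t : ℕ) :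
    (liftWalk G p t).1 + (liftWalk G p t).2 = p.1 + p.2 + t := by
  induction t with
  | zero => rfl
  | succ t ih => rw [liftWalk, liftStep_fst_add_snd, ih]; ring

end

theorem card_le_two_mul_of_lrmTrans {n N : ℕ} [NeZero n] [NeZero N] {g : Fin N → Fin n → Bool}
    (hdist : Function.Injective g) (hw : (univ.filter (fun j => g 0 j = true)).card = 2)
    (htrans : ∀ i : Fin N, LRMTrans (g i) (g (i + 1))) : N ≤ 2 * n := by
  let G : ℕ → Fin n → Bool := fun t => g t
  have hG : ∀ t, LRMTrans (G t) (G (t + 1)) := fun t => by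
    simpa only [G, Nat.cast_succ] using htrans t
  obtain ⟨p, hp⟩ := exists_isLift (w := G 0) (by simpa [G] using hw)
  have hlift := isLift_liftWalk hG hp
  have hsum := liftWalk_fst_add_snd G p
  obtain ⟨t, ht⟩ := exists_add_two_mul_eq_add (u := fun t => (liftWalk G p t).1)
    (C := p.1 + p.2 + n) (fun t => liftStep_fst _ _)
    (fun t => by have := hlift t; have := hsum t; simp only [IsLift] at *; omega)
    (fun t => by have := hlift t; have := hsum t; simp only [IsLift] at *; omega) n
  have hGt : G (t + 2 * n) = G t := (hlift t).eq_of_add_eq (hlift (t + 2 * n)) ht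
    (by have := hsum t; have := hsum (t + 2 * n); omega)
  have hmod : 2 * n % N = 0 := by simpa [Fin.ext_iff, Fin.val_natCast] using hdist hGt
  exact Nat.le_of_dvd (by have := NeZero.pos n; omega) (Nat.dvd_of_mod_eq_zero hmod)

theorem stmt_6 (n N : ℕ) [NeZero n] [NeZero N] (hn : 5 ≤ n)
    (g : Fin N → (Fin n → Bool))
    (hdist : Function.Injective g)
    (hw : ∀ i : Fin N, (Finset.univ.filter (fun j => g i j = true)).card = 2)
    (htrans : ∀ i : Fin N, LRMTrans (g i) (g (i + 1))) :
    N ≤ Nat.choose n 2 - (n - 3) * (n - 5) / 8 :=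
  (card_le_two_mul_of_lrmTrans hdist (hw 0) htrans).trans (two_mul_le_choose_two_sub hn)
end
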